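/- arXiv:2510.01805 — 5 statements merged into one kernel-verified Lean document; each statement's English description precedes it below -/
import Mathlib

section
/- Let G be a group and φ : G → ℤ a surjective group homomorphism. Then the kernel of φ is finitely generated as a group if and only if both submonoids G_φ = {g ∈ G : φ(g) ≥ 0} and G_{-φ} = {g ∈ G : φ(g) ≤ 0} are finitely generated as monoids. -/
/-- The non-negative part `G_φ = {g : φ g ≥ 0}` of a group under a homomorphism to `ℤ`. -/
def nonnegSubmonoid {G : Type*} [Group G] (φ : G →* Multiplicative ℤ) : Submonoid G where
  carrier := {g | 0 ≤ Multiplicative.toAdd (φ g)}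
  one_mem' := by simp
  mul_mem' := by
    intro a b ha hb
    simp only [Set.mem_setOf_eq, map_mul, toAdd_mul] at *
    omega

/-- The non-positive part `G_{-φ} = {g : φ g ≤ 0}`. -/
def nonposSubmonoid {G : Type*} [Group G] (φ : G →* Multiplicative ℤ) : Submonoid G where
  carrier := {g | Multiplicative.toAdd (φ g) ≤ 0}
  one_mem' := by simp
  mul_mem' := by
    intro a b ha hb
    simp only [Set.mem_setOf_eq, map_mul, toAdd_mul] at *
    omega

theorem mem_nonnegSubmonoid {G : Type*} [Group G] (φ : G →* Multiplicative ℤ) (g : G) :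
    g ∈ nonnegSubmonoid φ ↔ 0 ≤ Multiplicative.toAdd (φ g) := Iff.rfl

theorem mem_nonposSubmonoid {G : Type*} [Group G] (φ : G →* Multiplicative ℤ) (g : G) :
    g ∈ nonposSubmonoid φ ↔ Multiplicative.toAdd (φ g) ≤ 0 := Iff.rfl

/-- If the kernel is f.g. as a group, the nonnegative submonoid is f.g. -/
theorem fwd_aux {G : Type*} [Group G] (φ : G →* Multiplicative ℤ)
    (hφ : Function.Surjective φ) (h : φ.ker.FG) : (nonnegSubmonoid φ).FG := by
  obtain ⟨S, hS, hSfin⟩ := (Subgroup.fg_iff _).1 h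
  obtain ⟨t, ht⟩ := hφ (Multiplicative.ofAdd 1)
  have htt : Multiplicative.toAdd (φ t) = 1 := by rw [ht]; rfl
  have hSker : ∀ s ∈ S, s ∈ φ.ker := fun s hs => hS ▸ Subgroup.subset_closure hs
  rw [Submonoid.fg_iff]
  refine ⟨S ∪ S⁻¹ ∪ {t}, ?_, (hSfin.union hSfin.inv).union (Set.finite_singleton t)⟩
  apply le_antisymm
  · rw [Submonoid.closure_le]
    rintro x ((hx | hx) | hx)
    · have h1 : φ x = 1 := MonoidHom.mem_ker.1 (hSker x hx)
      show 0 ≤ Multiplicative.toAdd (φ x)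
      rw [h1]; simp
    · have h1 : φ x⁻¹ = 1 := MonoidHom.mem_ker.1 (hSker x⁻¹ hx)
      have h2 : φ x = 1 := by
        have : (φ x)⁻¹ = 1 := by rw [← map_inv]; exact h1
        simpa using this
      show 0 ≤ Multiplicative.toAdd (φ x)
      rw [h2]; simp
    · rw [Set.mem_singleton_iff] at hx
      subst hx
      show 0 ≤ Multiplicative.toAdd (φ x)
      rw [htt]; norm_num
  · intro g hg
    rw [mem_nonnegSubmonoid] at hg
    set n : ℤ := Multiplicative.toAdd (φ g) with hn
    have hker : g * (t ^ n.toNat)⁻¹ ∈ φ.ker := by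
      rw [MonoidHom.mem_ker, ← toAdd_eq_zero]
      simp only [map_mul, map_inv, map_pow, toAdd_mul, toAdd_inv, toAdd_pow, htt, nsmul_eq_mul, mul_one]
      omega
    have hmem : g * (t ^ n.toNat)⁻¹ ∈ Submonoid.closure (S ∪ S⁻¹ ∪ {t}) := by
      have h1 : g * (t ^ n.toNat)⁻¹ ∈ Submonoid.closure (S ∪ S⁻¹) := by
        have := Subgroup.closure_toSubmonoid S
        rw [hS] at this
        rw [← this]
        exact hker
      exact Submonoid.closure_mono Set.subset_union_left h1
    have htin : t ∈ Submonoid.closure (S ∪ S⁻¹ ∪ {t}) :=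
      Submonoid.subset_closure (by simp)
    have htmem : t ^ n.toNat ∈ Submonoid.closure (S ∪ S⁻¹ ∪ {t}) := pow_mem htin n.toNat
    have heq : g = (g * (t ^ n.toNat)⁻¹) * t ^ n.toNat := by group
    rw [heq]
    exact mul_mem hmem htmem

/-- Values in a list of nonneg integers summing to zero are all zero. -/
theorem list_all_zero (l : List ℤ) (h : ∀ x ∈ l, 0 ≤ x) (hs : l.sum = 0) :
    ∀ x ∈ l, x = 0 := by
  induction l with
  | nil => simp
  | cons a l ih =>
    have hsum : 0 ≤ l.sum := List.sum_nonneg (fun x hx => h x (List.mem_cons_of_mem _ hx))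
    have ha : 0 ≤ a := h a List.mem_cons_self
    rw [List.sum_cons] at hs
    have ha0 : a = 0 := by omega
    have hl0 : l.sum = 0 := by omega
    intro x hx
    rcases List.mem_cons.1 hx with rfl | hx
    · exact ha0
    · exact ih (fun y hy => h y (List.mem_cons_of_mem _ hy)) hl0 x hx

/-- If the nonnegative submonoid is f.g. as a monoid, the kernel is f.g. as a group. -/
theorem bwd_aux {G : Type*} [Group G] (φ : G →* Multiplicative ℤ)
    (h : (nonnegSubmonoid φ).FG) : φ.ker.FG := by
  obtain ⟨A, hA, hAfin⟩ := (Submonoid.fg_iff _).1 h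
  rw [Subgroup.fg_iff]
  refine ⟨A ∩ {g | φ g = 1}, ?_, hAfin.inter_of_left _⟩
  apply le_antisymm
  · rw [Subgroup.closure_le]
    rintro x ⟨-, hx⟩
    exact MonoidHom.mem_ker.2 hx
  · intro g hg
    have hg' : g ∈ Submonoid.closure A := by
      rw [hA, mem_nonnegSubmonoid, MonoidHom.mem_ker.1 hg]; simp
    obtain ⟨l, hl, rfl⟩ := Submonoid.exists_list_of_mem_closure hg'
    have hsum : (l.map fun x => Multiplicative.toAdd (φ x)).sum = 0 := by
      have h1 : φ l.prod = (l.map φ).prod := map_list_prod φ l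
      have h2 : (l.map φ).prod = 1 := h1 ▸ MonoidHom.mem_ker.1 hg
      have h3 : Multiplicative.toAdd ((l.map φ).prod) = 0 := by rw [h2]; rfl
      rw [← h3]
      clear h1 h2 h3 hg hg' hl
      induction l with
      | nil => simp
      | cons a l ih => simp only [List.map_cons, List.sum_cons, List.prod_cons, toAdd_mul, ih]
    have hall : ∀ x ∈ l, Multiplicative.toAdd (φ x) = 0 := by
      intro x hx
      refine list_all_zero _ ?_ hsum _ (List.mem_map_of_mem hx)
      rintro y hy
      obtain ⟨z, hz, rfl⟩ := List.mem_map.1 hy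
      have : z ∈ nonnegSubmonoid φ := hA ▸ Submonoid.subset_closure (hl z hz)
      exact (mem_nonnegSubmonoid φ z).1 this
    refine Subgroup.list_prod_mem _ (fun x hx => Subgroup.subset_closure ?_)
    exact ⟨hl x hx, toAdd_eq_zero.1 (hall x hx)⟩

/-- **Bieri–Neumann–Strebel style criterion.**  For a surjection `φ : G ↠ ℤ`, the kernel
of `φ` is finitely generated as a group if and only if both submonoids
`G_φ = {g : φ g ≥ 0}` and `G_{-φ} = {g : φ g ≤ 0}` are finitely generated as monoids. -/
theorem ker_fg_iff_both_monoids_fg {G : Type*} [Group G]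
    (φ : G →* Multiplicative ℤ) (hφ : Function.Surjective φ) :
    φ.ker.FG ↔ (nonnegSubmonoid φ).FG ∧ (nonposSubmonoid φ).FG := by
  set ψ : G →* Multiplicative ℤ := (invMonoidHom).comp φ with hψ
  have hψsurj : Function.Surjective ψ := fun x => by
    obtain ⟨g, hg⟩ := hφ x⁻¹
    exact ⟨g, by simp [hψ, hg, invMonoidHom]⟩
  have hker : ψ.ker = φ.ker := by
    ext g
    simp [hψ, MonoidHom.mem_ker, invMonoidHom, inv_eq_one]
  have hpos : nonposSubmonoid φ = nonnegSubmonoid ψ := by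
    ext g
    rw [mem_nonposSubmonoid, mem_nonnegSubmonoid]
    simp only [hψ, MonoidHom.comp_apply, invMonoidHom_apply, toAdd_inv]
    omega
  constructor
  · intro h
    exact ⟨fwd_aux φ hφ h, hpos ▸ fwd_aux ψ hψsurj (hker ▸ h)⟩
  · intro ⟨h1, _⟩
    exact bwd_aux φ h1
end

section
/- Let F₂ × F₂ be the direct product of two free groups of rank 2 with free bases {a,b} and {c,d}, and let φ : F₂ × F₂ → ℤ be the homomorphism sending each of a, b, c, d to 1. Then the kernel of φ is generated by the four elements ac⁻¹, ad⁻¹, bc⁻¹, bd⁻¹. -/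
open FreeGroup

/-- The free group on two generators. -/
abbrev F2 := FreeGroup (Fin 2)

/-- The homomorphism `F₂ × F₂ → ℤ` sending each of the four generators to `1`. -/
def phiF2F2 : F2 × F2 →* Multiplicative ℤ :=
  MonoidHom.coprod
    (FreeGroup.lift fun _ => Multiplicative.ofAdd (1 : ℤ))
    (FreeGroup.lift fun _ => Multiplicative.ofAdd (1 : ℤ))

def sF2 : F2 →* Multiplicative ℤ := FreeGroup.lift fun _ => Multiplicative.ofAdd (1 : ℤ)

def psiF2 : F2 →* F2 × F2 := FreeGroup.lift fun i => (FreeGroup.of i, (FreeGroup.of 0)⁻¹)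
def chiF2 : F2 →* F2 × F2 := FreeGroup.lift fun i => ((FreeGroup.of 0)⁻¹, FreeGroup.of i)

lemma psiF2_apply (x : F2) :
    psiF2 x = (x, ((FreeGroup.of 0 : F2) ^ (sF2 x).toAdd)⁻¹) := by
  have h1 : (MonoidHom.fst F2 F2).comp psiF2 = MonoidHom.id F2 := by
    apply FreeGroup.ext_hom; intro i; simp [psiF2]
  have h2 : (MonoidHom.snd F2 F2).comp psiF2 =
      (zpowersHom F2 ((FreeGroup.of 0 : F2)⁻¹)).comp sF2 := by
    apply FreeGroup.ext_hom; intro i; simp [psiF2, sF2]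
  have e1 := DFunLike.congr_fun h1 x
  have e2 := DFunLike.congr_fun h2 x
  simp at e1 e2
  exact Prod.ext e1 e2

lemma chiF2_apply (y : F2) :
    chiF2 y = (((FreeGroup.of 0 : F2) ^ (sF2 y).toAdd)⁻¹, y) := by
  have h1 : (MonoidHom.snd F2 F2).comp chiF2 = MonoidHom.id F2 := by
    apply FreeGroup.ext_hom; intro i; simp [chiF2]
  have h2 : (MonoidHom.fst F2 F2).comp chiF2 =
      (zpowersHom F2 ((FreeGroup.of 0 : F2)⁻¹)).comp sF2 := by
    apply FreeGroup.ext_hom; intro i; simp [chiF2, sF2]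
  have e1 := DFunLike.congr_fun h1 y
  have e2 := DFunLike.congr_fun h2 y
  simp at e1 e2
  exact Prod.ext e2 e1

/-- With free bases `{a,b}` and `{c,d}` of the two factors of `F₂ × F₂` and
`φ : F₂ × F₂ → ℤ` sending each generator to `1`, the kernel of `φ` is generated by
`ac⁻¹, ad⁻¹, bc⁻¹, bd⁻¹`. -/
theorem ker_phiF2F2_eq_closure :
    phiF2F2.ker =
      Subgroup.closure
        (let a : F2 × F2 := (FreeGroup.of 0, 1)
         let b : F2 × F2 := (FreeGroup.of 1, 1)
         let c : F2 × F2 := (1, FreeGroup.of 0)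
         let d : F2 × F2 := (1, FreeGroup.of 1)
         {a * c⁻¹, a * d⁻¹, b * c⁻¹, b * d⁻¹}) := by
  show phiF2F2.ker = Subgroup.closure
      {((FreeGroup.of 0, 1) : F2 × F2) * (1, FreeGroup.of 0)⁻¹,
       ((FreeGroup.of 0, 1) : F2 × F2) * (1, FreeGroup.of 1)⁻¹,
       ((FreeGroup.of 1, 1) : F2 × F2) * (1, FreeGroup.of 0)⁻¹,
       ((FreeGroup.of 1, 1) : F2 × F2) * (1, FreeGroup.of 1)⁻¹}
  set S : Set (F2 × F2) :=
      {((FreeGroup.of 0, 1) : F2 × F2) * (1, FreeGroup.of 0)⁻¹,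
       ((FreeGroup.of 0, 1) : F2 × F2) * (1, FreeGroup.of 1)⁻¹,
       ((FreeGroup.of 1, 1) : F2 × F2) * (1, FreeGroup.of 0)⁻¹,
       ((FreeGroup.of 1, 1) : F2 × F2) * (1, FreeGroup.of 1)⁻¹} with hS
  have hSsimp : S = {((FreeGroup.of 0, (FreeGroup.of 0)⁻¹) : F2 × F2),
       (FreeGroup.of 0, (FreeGroup.of 1)⁻¹),
       (FreeGroup.of 1, (FreeGroup.of 0)⁻¹),
       (FreeGroup.of 1, (FreeGroup.of 1)⁻¹)} := by
    simp [hS, Prod.ext_iff, Prod.mul_def]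
  apply le_antisymm
  · intro p hp
    have hker : sF2 p.1 * sF2 p.2 = 1 := by
      simpa [phiF2F2, MonoidHom.mem_ker, MonoidHom.coprod_apply, sF2] using hp
    have hpsi : ∀ x : F2, psiF2 x ∈ Subgroup.closure S := by
      intro x
      induction x using FreeGroup.induction_on with
      | C1 => rw [_root_.map_one]; exact Subgroup.one_mem _
      | of i =>
        apply Subgroup.subset_closure
        rw [hSsimp]
        fin_cases i
        · left; exact FreeGroup.lift_apply_of
        · right; right; left; exact FreeGroup.lift_apply_of
      | inv_of i h => rw [_root_.map_inv]; exact Subgroup.inv_mem _ h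
      | mul x y hx hy => rw [_root_.map_mul]; exact Subgroup.mul_mem _ hx hy
    have hchi : ∀ y : F2, chiF2 y ∈ Subgroup.closure S := by
      intro y
      induction y using FreeGroup.induction_on with
      | C1 => rw [_root_.map_one]; exact Subgroup.one_mem _
      | of i =>
        fin_cases i
        · show chiF2 (FreeGroup.of 0) ∈ _
          have : chiF2 (FreeGroup.of 0) =
              (((FreeGroup.of 0, (FreeGroup.of 0)⁻¹) : F2 × F2))⁻¹ := by
            rw [show chiF2 (FreeGroup.of 0) = ((FreeGroup.of 0 : F2)⁻¹, FreeGroup.of 0)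
              from FreeGroup.lift_apply_of]
            simp [Prod.ext_iff]
          rw [this]
          exact Subgroup.inv_mem _ (Subgroup.subset_closure (by rw [hSsimp]; left; rfl))
        · show chiF2 (FreeGroup.of 1) ∈ _
          have : chiF2 (FreeGroup.of 1) =
              (((FreeGroup.of 0, (FreeGroup.of 1)⁻¹) : F2 × F2))⁻¹ := by
            rw [show chiF2 (FreeGroup.of 1) = ((FreeGroup.of 0 : F2)⁻¹, FreeGroup.of 1)
              from FreeGroup.lift_apply_of]
            simp [Prod.ext_iff]
          rw [this]
          exact Subgroup.inv_mem _ (Subgroup.subset_closure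
            (by rw [hSsimp]; right; left; rfl))
      | inv_of i h => rw [_root_.map_inv]; exact Subgroup.inv_mem _ h
      | mul x y hx hy => rw [_root_.map_mul]; exact Subgroup.mul_mem _ hx hy
    set n : ℤ := (sF2 p.1).toAdd with hn
    have hz : sF2 ((FreeGroup.of 0 : F2) ^ n * p.2) = 1 := by
      rw [_root_.map_mul, map_zpow]
      rw [show sF2 (FreeGroup.of 0) = Multiplicative.ofAdd (1 : ℤ) from FreeGroup.lift_apply_of]
      rw [hn]
      rw [← hker]
      congr 1
      rw [← ofAdd_zsmul]
      simp
    have hfact : p = psiF2 p.1 * chiF2 ((FreeGroup.of 0 : F2) ^ n * p.2) := by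
      rw [psiF2_apply, chiF2_apply, hz, ← hn]
      simp [Prod.mul_def, ← mul_assoc]
    rw [hfact]
    exact Subgroup.mul_mem _ (hpsi _) (hchi _)
  · rw [Subgroup.closure_le]
    intro x hx
    simp only [hS, Set.mem_insert_iff, Set.mem_singleton_iff] at hx
    rcases hx with rfl | rfl | rfl | rfl <;>
      refine MonoidHom.mem_ker.mpr ?_ <;>
      simp [phiF2F2, MonoidHom.coprod_apply, Prod.mul_def]
end

section
/- Let K be a field, G a group whose group ring KG has no nontrivial units and no zero divisors, and φ : G → ℤ an epimorphism. A nonzero element x ∈ KG is invertible in the Novikov ring of (G, φ) if and only if φ restricted to the support of x attains its minimum at a unique element of the support. -/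
open Multiplicative

/-- A formal series `y : G → K` satisfies the *Novikov condition* for `φ` if for each
`C : ℤ` only finitely many elements of its support have `φ`-value `≤ C` (equivalently,
writing `KG` as twisted Laurent polynomials over `K ker φ` in a variable `t` with
`φ t = 1`, the series lies in the Novikov ring of twisted Laurent series whose powers
of `t` are bounded below, with coefficients in `K ker φ`). -/
def IsNovikov {K G : Type*} [Field K] [Group G] (φ : G →* Multiplicative ℤ)
    (y : G → K) : Prop :=
  ∀ C : ℤ, {g : G | y g ≠ 0 ∧ toAdd (φ g) ≤ C}.Finite

/-- Convolution of a group-ring element with a formal series (on the left). -/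
noncomputable def convL {K G : Type*} [Field K] [Group G]
    (x : MonoidAlgebra K G) (y : G → K) : G → K :=
  fun g => ∑ h ∈ x.coeff.support, x.coeff h * y (h⁻¹ * g)

/-- Convolution of a formal series with a group-ring element (on the right). -/
noncomputable def convR {K G : Type*} [Field K] [Group G]
    (y : G → K) (x : MonoidAlgebra K G) : G → K :=
  fun g => ∑ h ∈ x.coeff.support, y (g * h⁻¹) * x.coeff h

/-- The identity series `δ₁`. -/
noncomputable def deltaOne {K G : Type*} [Field K] [Group G] : G → K :=
  open Classical in
  fun g => if g = 1 then 1 else 0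

section Aux
open Finset
variable {K G : Type*} [Field K] [Group G]


lemma mulL (p q : MonoidAlgebra K G) (g : G) :
    (p * q).coeff g = ∑ h ∈ p.coeff.support, p.coeff h * q.coeff (h⁻¹ * g) :=
  MonoidAlgebra.coeff_mul_apply_left p q g

lemma mulR (p q : MonoidAlgebra K G) (g : G) :
    (p * q).coeff g = ∑ h ∈ q.coeff.support, p.coeff (g * h⁻¹) * q.coeff h :=
  MonoidAlgebra.coeff_mul_apply_right p q g

lemma phi_mul (φ : G →* Multiplicative ℤ) (g h : G) :
    toAdd (φ (g * h)) = toAdd (φ g) + toAdd (φ h) := by simp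

lemma one_apply' (g : G) :
    (1 : MonoidAlgebra K G).coeff g = deltaOne g := by
  classical
  have h1 : (1 : MonoidAlgebra K G) = MonoidAlgebra.single 1 1 := rfl
  rw [h1, MonoidAlgebra.coeff_single, Finsupp.single_apply, deltaOne]
  by_cases h : g = 1
  · simp [h]
  · simp [h, Ne.symm h]

lemma forward_dir
    (hnzd : ∀ a b : MonoidAlgebra K G, a * b = 0 → a = 0 ∨ b = 0)
    (htu : ∀ u v : MonoidAlgebra K G, u * v = 1 → v * u = 1 →
      ∃ (c : K) (g : G), u = MonoidAlgebra.single g c)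
    (φ : G →* Multiplicative ℤ) (x : MonoidAlgebra K G) (hx : x ≠ 0)
    (y : G → K) (hNov : IsNovikov φ y)
    (hL : convL x y = deltaOne) (hR : convR y x = deltaOne) :
    ∃ g ∈ x.coeff.support, ∀ h ∈ x.coeff.support, h ≠ g → toAdd (φ g) < toAdd (φ h) := by
  classical
  have hsne : x.coeff.support.Nonempty := Finsupp.support_nonempty_iff.2 (mt MonoidAlgebra.coeff_eq_zero.1 hx)
  set A := x.coeff.support.image (fun g => toAdd (φ g)) with hA
  have hAne : A.Nonempty := hsne.image _
  set a := A.min' hAne with haa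
  obtain ⟨gx, hgx, hgxa⟩ : ∃ g ∈ x.coeff.support, toAdd (φ g) = a :=
    Finset.mem_image.1 (A.min'_mem hAne)
  have hax : ∀ h ∈ x.coeff.support, a ≤ toAdd (φ h) := fun h hh =>
    Finset.min'_le _ _ (Finset.mem_image_of_mem _ hh)
  set x₀ : MonoidAlgebra K G :=
    MonoidAlgebra.ofCoeff (Finsupp.onFinset x.coeff.support (fun g => if toAdd (φ g) = a then x.coeff g else 0)
      (fun g hg => by
        rw [Finsupp.mem_support_iff]
        intro h0
        rw [h0, ite_self] at hg
        exact hg rfl)) with hx₀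
  have hx₀app : ∀ g, x₀.coeff g = if toAdd (φ g) = a then x.coeff g else 0 := fun g => rfl
  have hx₀sub : x₀.coeff.support ⊆ x.coeff.support := by
    intro h hh
    rw [Finsupp.mem_support_iff] at hh ⊢
    intro h0
    apply hh
    rw [hx₀app]
    split <;> simp [h0]
  have hx₀ne : x₀ ≠ 0 := by
    intro h0
    have : x₀.coeff gx = 0 := by rw [h0]; rfl
    rw [hx₀app, if_pos hgxa] at this
    exact Finsupp.mem_support_iff.1 hgx this
  -- y is nonzero
  obtain ⟨g₁, hg₁⟩ : ∃ g, y g ≠ 0 := by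
    by_contra hy0
    push_neg at hy0
    have h1 : convL x y (1 : G) = deltaOne (1 : G) := congrFun hL (1 : G)
    rw [convL] at h1
    simp only [hy0, mul_zero, Finset.sum_const_zero, deltaOne] at h1
    simp at h1
  set F := (hNov (toAdd (φ g₁))).toFinset with hF
  have hg₁F : g₁ ∈ F := by
    rw [hF, Set.Finite.mem_toFinset, Set.mem_setOf_eq]
    exact ⟨hg₁, le_refl _⟩
  have hFne : (F.image (fun g => toAdd (φ g))).Nonempty := ⟨_, Finset.mem_image_of_mem _ hg₁F⟩
  set b := (F.image (fun g => toAdd (φ g))).min' hFne with hbb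
  obtain ⟨gy, hgyF, hgyb⟩ : ∃ g ∈ F, toAdd (φ g) = b :=
    Finset.mem_image.1 ((F.image (fun g => toAdd (φ g))).min'_mem hFne)
  have hgy : y gy ≠ 0 := ((Set.Finite.mem_toFinset _).1 hgyF).1
  have hbg₁ : b ≤ toAdd (φ g₁) := Finset.min'_le _ _ (Finset.mem_image_of_mem _ hg₁F)
  have hby : ∀ g, y g ≠ 0 → b ≤ toAdd (φ g) := by
    intro g hg
    by_cases hle : toAdd (φ g) ≤ toAdd (φ g₁)
    · refine Finset.min'_le _ _ (Finset.mem_image_of_mem _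
        ((Set.Finite.mem_toFinset _).2 ?_))
      rw [Set.mem_setOf_eq]
      exact ⟨hg, hle⟩
    · omega
  set y₀ : MonoidAlgebra K G :=
    MonoidAlgebra.ofCoeff (Finsupp.onFinset F (fun g => if toAdd (φ g) = b then y g else 0)
      (fun g hg => by
        rw [Set.Finite.mem_toFinset, Set.mem_setOf_eq]
        by_cases hgb : toAdd (φ g) = b
        · rw [if_pos hgb] at hg
          exact ⟨hg, by omega⟩
        · rw [if_neg hgb] at hg
          exact absurd rfl hg)) with hy₀
  have hy₀app : ∀ g, y₀.coeff g = if toAdd (φ g) = b then y g else 0 := fun g => rfl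
  have hy₀ne : y₀ ≠ 0 := by
    intro h0
    have : y₀.coeff gy = 0 := by rw [h0]; rfl
    rw [hy₀app, if_pos hgyb] at this
    exact hgy this
  have hphiinv : ∀ h g : G, toAdd (φ (h⁻¹ * g)) = toAdd (φ g) - toAdd (φ h) := by
    intro h g
    rw [phi_mul]
    simp only [map_inv, toAdd_inv]
    ring
  have hphiinv' : ∀ g h : G, toAdd (φ (g * h⁻¹)) = toAdd (φ g) - toAdd (φ h) := by
    intro g h
    rw [phi_mul]
    simp only [map_inv, toAdd_inv]
    ring
  -- key computations
  have keyL : ∀ g : G, toAdd (φ g) = a + b → (x₀ * y₀).coeff g = convL x y g := by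
    intro g hg
    rw [mulL, convL]
    rw [Finset.sum_subset hx₀sub
      (fun h _ hh => by rw [Finsupp.notMem_support_iff.1 hh, zero_mul])]
    refine Finset.sum_congr rfl fun h hh => ?_
    by_cases hha : toAdd (φ h) = a
    · have h2 : toAdd (φ (h⁻¹ * g)) = b := by rw [hphiinv]; omega
      rw [hx₀app, if_pos hha, hy₀app, if_pos h2]
    · have hlt : a < toAdd (φ h) := lt_of_le_of_ne (hax h hh) (Ne.symm hha)
      have h2 : y (h⁻¹ * g) = 0 := by
        by_contra hne
        have := hby _ hne
        rw [hphiinv] at this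
        omega
      have h3 : y₀.coeff (h⁻¹ * g) = 0 := by
        rw [hy₀app]
        split <;> simp [h2]
      rw [hx₀app, if_neg hha, h2, h3, zero_mul, mul_zero]
  have hsuppL : ∀ g : G, toAdd (φ g) ≠ a + b → (x₀ * y₀).coeff g = 0 := by
    intro g hg
    rw [mulL]
    apply Finset.sum_eq_zero
    intro h hh
    have hha : toAdd (φ h) = a := by
      by_contra hne
      exact Finsupp.mem_support_iff.1 hh (by rw [hx₀app, if_neg hne])
    have hyb : toAdd (φ (h⁻¹ * g)) ≠ b := by
      rw [hphiinv]
      omega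
    rw [hy₀app, if_neg hyb, mul_zero]
  have keyR : ∀ g : G, toAdd (φ g) = a + b → (y₀ * x₀).coeff g = convR y x g := by
    intro g hg
    rw [mulR, convR]
    rw [Finset.sum_subset hx₀sub
      (fun h _ hh => by rw [Finsupp.notMem_support_iff.1 hh, mul_zero])]
    refine Finset.sum_congr rfl fun h hh => ?_
    by_cases hha : toAdd (φ h) = a
    · have h2 : toAdd (φ (g * h⁻¹)) = b := by rw [hphiinv']; omega
      rw [hx₀app, if_pos hha, hy₀app, if_pos h2]
    · have hlt : a < toAdd (φ h) := lt_of_le_of_ne (hax h hh) (Ne.symm hha)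
      have h2 : y (g * h⁻¹) = 0 := by
        by_contra hne
        have := hby _ hne
        rw [hphiinv'] at this
        omega
      have h3 : y₀.coeff (g * h⁻¹) = 0 := by
        rw [hy₀app]
        split <;> simp [h2]
      rw [h2, h3, zero_mul, zero_mul]
  have hsuppR : ∀ g : G, toAdd (φ g) ≠ a + b → (y₀ * x₀).coeff g = 0 := by
    intro g hg
    rw [mulR]
    apply Finset.sum_eq_zero
    intro h hh
    have hha : toAdd (φ h) = a := by
      by_contra hne
      exact Finsupp.mem_support_iff.1 hh (by rw [hx₀app, if_neg hne])
    have hyb : toAdd (φ (g * h⁻¹)) ≠ b := by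
      rw [hphiinv']
      omega
    rw [hy₀app, if_neg hyb, zero_mul]
  have hphi1 : toAdd (φ (1 : G)) = 0 := by simp
  have hab : a + b = 0 := by
    by_contra hab
    have hzero : x₀ * y₀ = 0 := by
      ext g
      simp only [MonoidAlgebra.coeff_zero, Finsupp.coe_zero, Pi.zero_apply]
      by_cases hg : toAdd (φ g) = a + b
      · rw [keyL g hg, hL]
        have hg1 : g ≠ 1 := by
          intro h1
          rw [h1, hphi1] at hg
          omega
        simp [deltaOne, hg1]
      · exact hsuppL g hg
    rcases hnzd _ _ hzero with h | h
    · exact hx₀ne h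
    · exact hy₀ne h
  have hone : x₀ * y₀ = 1 := by
    ext g
    by_cases hg : toAdd (φ g) = a + b
    · rw [keyL g hg, hL, ← one_apply']
    · rw [hsuppL g hg, one_apply']
      have hg1 : g ≠ 1 := by
        intro h1
        rw [h1, hphi1] at hg
        omega
      simp [deltaOne, hg1]
  have hone' : y₀ * x₀ = 1 := by
    ext g
    by_cases hg : toAdd (φ g) = a + b
    · rw [keyR g hg, hR, ← one_apply']
    · rw [hsuppR g hg, one_apply']
      have hg1 : g ≠ 1 := by
        intro h1
        rw [h1, hphi1] at hg
        omega
      simp [deltaOne, hg1]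
  obtain ⟨c, g₀, hx₀eq⟩ := htu x₀ y₀ hone hone'
  have hc0 : c ≠ 0 := by
    rintro rfl
    apply hx₀ne
    rw [hx₀eq]
    exact MonoidAlgebra.single_zero _
  have hg₀c : x₀.coeff g₀ = c := by rw [hx₀eq, MonoidAlgebra.coeff_single, Finsupp.single_apply, if_pos rfl]
  have hg₀a : toAdd (φ g₀) = a := by
    by_contra hne
    rw [hx₀app, if_neg hne] at hg₀c
    exact hc0 hg₀c.symm
  have hg₀x : x.coeff g₀ ≠ 0 := by
    rw [hx₀app, if_pos hg₀a] at hg₀c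
    rw [hg₀c]
    exact hc0
  refine ⟨g₀, Finsupp.mem_support_iff.2 hg₀x, fun h hh hne => ?_⟩
  rcases lt_or_eq_of_le (hax h hh) with hlt | heq
  · omega
  · exfalso
    have : x₀.coeff h = x.coeff h := by rw [hx₀app, if_pos heq.symm]
    rw [hx₀eq, MonoidAlgebra.coeff_single, Finsupp.single_apply, if_neg (Ne.symm hne)] at this
    exact Finsupp.mem_support_iff.1 hh this.symm

lemma pow_support (φ : G →* Multiplicative ℤ) (w : MonoidAlgebra K G)
    (hw : ∀ h ∈ w.coeff.support, 1 ≤ toAdd (φ h)) :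
    ∀ n : ℕ, ∀ h ∈ (w ^ n).coeff.support, (n : ℤ) ≤ toAdd (φ h) := by
  classical
  intro n
  induction n with
  | zero =>
    intro h hh
    simp only [pow_zero] at hh
    have h1 : (1 : MonoidAlgebra K G) = MonoidAlgebra.single 1 1 := rfl
    rw [h1, MonoidAlgebra.coeff_single] at hh
    have : h = 1 := by simpa using Finsupp.support_single_subset hh
    simp [this]
  | succ n ih =>
    intro h hh
    rw [pow_succ] at hh
    obtain ⟨h₁, hh₁, h₂, hh₂, rfl⟩ := Finset.mem_mul.1 (MonoidAlgebra.support_coeff_mul_subset _ _ hh)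
    have := ih h₁ hh₁
    have := hw h₂ hh₂
    rw [phi_mul]
    push_cast
    omega

lemma reverse_dir (φ : G →* Multiplicative ℤ) (x : MonoidAlgebra K G)
    (g₀ : G) (hg₀ : g₀ ∈ x.coeff.support)
    (hmin : ∀ h ∈ x.coeff.support, h ≠ g₀ → toAdd (φ g₀) < toAdd (φ h)) :
    ∃ y : G → K, IsNovikov φ y ∧ convL x y = deltaOne ∧ convR y x = deltaOne := by
  classical
  set a : ℤ := toAdd (φ g₀) with ha
  set c : K := x.coeff g₀ with hc
  have hc0 : c ≠ 0 := Finsupp.mem_support_iff.1 hg₀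
  have hale : ∀ h ∈ x.coeff.support, a ≤ toAdd (φ h) := by
    intro h hh
    by_cases hne : h = g₀
    · simp [hne, ha]
    · exact le_of_lt (hmin h hh hne)
  set u : MonoidAlgebra K G := MonoidAlgebra.single g₀⁻¹ c⁻¹ with hu
  set w : MonoidAlgebra K G := 1 - u * x with hwdef
  have hux : u * x = 1 - w := by rw [hwdef, sub_sub_cancel]
  have hcu : MonoidAlgebra.single g₀ c * u = 1 := by
    rw [hu, MonoidAlgebra.single_mul_single, mul_inv_cancel₀ hc0, mul_inv_cancel]
    rfl
  have hxfact : MonoidAlgebra.single g₀ c * (u * x) = x := by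
    rw [← mul_assoc, hcu, one_mul]
  have hw_supp : ∀ h ∈ w.coeff.support, 1 ≤ toAdd (φ h) := by
    intro h hh
    have hne : w.coeff h ≠ 0 := Finsupp.mem_support_iff.1 hh
    have hux_app : (u * x).coeff h = c⁻¹ * x.coeff (g₀ * h) := by
      rw [hu, MonoidAlgebra.coeff_single_mul_apply, inv_inv]
    have hwapp : w.coeff h = (1 : MonoidAlgebra K G).coeff h - c⁻¹ * x.coeff (g₀ * h) := by
      rw [hwdef, MonoidAlgebra.coeff_sub, Finsupp.sub_apply, hux_app]
    by_cases h1 : h = 1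
    · exfalso
      apply hne
      rw [hwapp, h1, mul_one, one_apply', deltaOne, ← hc]
      simp [inv_mul_cancel₀ hc0]
    · have hx0 : x.coeff (g₀ * h) ≠ 0 := by
        intro h0
        apply hne
        rw [hwapp, one_apply', deltaOne, h0]
        simp [h1]
      have hmem : g₀ * h ∈ x.coeff.support := Finsupp.mem_support_iff.2 hx0
      have := hmin (g₀ * h) hmem (by simpa using h1)
      rw [phi_mul] at this
      omega
  set S : ℕ → MonoidAlgebra K G := fun N => (∑ n ∈ Finset.range N, w ^ n) * u with hS
  have hSapp : ∀ (N : ℕ) (g : G), (S N).coeff g = ∑ n ∈ Finset.range N, (w ^ n * u).coeff g := by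
    intro N g
    rw [hS]
    simp only [Finset.sum_mul, MonoidAlgebra.coeff_sum]
    exact Finset.sum_apply' g
  have hvanish : ∀ (n : ℕ) (g : G), toAdd (φ g) + a < (n : ℤ) → (w ^ n * u).coeff g = 0 := by
    intro n g hlt
    by_contra hne
    obtain ⟨h₁, hh₁, h₂, hh₂, hgeq⟩ :=
      Finset.mem_mul.1 (MonoidAlgebra.support_coeff_mul_subset _ _ (Finsupp.mem_support_iff.2 hne))
    have h2eq : h₂ = g₀⁻¹ := by
      rw [hu, MonoidAlgebra.coeff_single] at hh₂
      simpa using Finsupp.support_single_subset hh₂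
    have hphi1 := pow_support φ w hw_supp n h₁ hh₁
    rw [← hgeq, h2eq, phi_mul] at hlt
    simp only [map_inv, toAdd_inv] at hlt
    omega
  have hstab : ∀ (g : G) (M N : ℕ), toAdd (φ g) + a < (M : ℤ) → M ≤ N → (S M).coeff g = (S N).coeff g := by
    intro g M N hM hMN
    rw [hSapp, hSapp]
    apply Finset.sum_subset (Finset.range_subset_range.2 hMN)
    intro n _ hn
    rw [Finset.mem_range, not_lt] at hn
    exact hvanish n g (by omega)
  set y : G → K := fun g => (S (toAdd (φ g) + a + 1).toNat).coeff g with hy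
  have hyS : ∀ (g : G) (N : ℕ), toAdd (φ g) + a < (N : ℤ) → y g = (S N).coeff g := by
    intro g N hN
    set M := (toAdd (φ g) + a + 1).toNat with hM
    have hM' : toAdd (φ g) + a < (M : ℤ) := by
      have := Int.self_le_toNat (toAdd (φ g) + a + 1)
      omega
    have e1 := hstab g M (max M N) hM' (le_max_left _ _)
    have e2 := hstab g N (max M N) hN (le_max_right _ _)
    rw [hy]
    simp only [← hM]
    rw [e1, e2]
  refine ⟨y, ?_, ?_, ?_⟩
  · -- Novikov
    intro C
    apply Set.Finite.subset (S (C + a + 1).toNat).coeff.support.finite_toSet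
    intro g ⟨hg, hgC⟩
    have hlt : toAdd (φ g) + a < ((C + a + 1).toNat : ℤ) := by
      have := Int.self_le_toNat (C + a + 1)
      omega
    rw [Finset.mem_coe, Finsupp.mem_support_iff, ← hyS g _ hlt]
    exact hg
  · -- convL
    funext g
    set N : ℕ := (toAdd (φ g) + 1).toNat with hN
    have hNg : toAdd (φ g) < (N : ℤ) := by
      have := Int.self_le_toNat (toAdd (φ g) + 1)
      omega
    have hterm : ∀ h ∈ x.coeff.support, y (h⁻¹ * g) = (S N).coeff (h⁻¹ * g) := by
      intro h hh
      apply hyS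
      rw [phi_mul]
      simp only [map_inv, toAdd_inv]
      have := hale h hh
      omega
    have step1 : convL x y g = (x * S N).coeff g := by
      rw [convL, mulL]
      exact Finset.sum_congr rfl fun h hh => by rw [hterm h hh]
    have hgeomR : (∑ n ∈ Finset.range N, w ^ n) * (1 - w) = 1 - w ^ N := by
      rw [← neg_sub w 1, mul_neg, geom_sum_mul, neg_sub]
    have hcomm : Commute (1 - w) (∑ n ∈ Finset.range N, w ^ n) := by
      refine Commute.sub_left (Commute.one_left _) ?_
      exact Commute.sum_right _ _ _ fun i _ => (Commute.refl w).pow_right i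
    have hgeom : (1 - w) * (∑ n ∈ Finset.range N, w ^ n) = 1 - w ^ N := by
      rw [hcomm.eq, hgeomR]
    have key : x * (∑ n ∈ Finset.range N, w ^ n)
        = MonoidAlgebra.single g₀ c * (1 - w ^ N) := by
      conv_lhs => rw [← hxfact, hux]
      rw [mul_assoc, hgeom]
    have hfact : x * S N = 1 - MonoidAlgebra.single g₀ c * (w ^ N * u) := by
      rw [hS]
      dsimp only
      rw [← mul_assoc, key, mul_sub, mul_one, sub_mul, hcu, mul_assoc]
    have hv : (MonoidAlgebra.single g₀ c * (w ^ N * u)).coeff g = 0 := by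
      rw [MonoidAlgebra.coeff_single_mul_apply]
      rw [hvanish N (g₀⁻¹ * g) (by rw [phi_mul]; simp only [map_inv, toAdd_inv]; omega)]
      ring
    rw [step1, hfact, MonoidAlgebra.coeff_sub, Finsupp.sub_apply, one_apply', hv, sub_zero]
  · -- convR
    funext g
    set N : ℕ := (toAdd (φ g) + 1).toNat with hN
    have hNg : toAdd (φ g) < (N : ℤ) := by
      have := Int.self_le_toNat (toAdd (φ g) + 1)
      omega
    have hterm : ∀ h ∈ x.coeff.support, y (g * h⁻¹) = (S N).coeff (g * h⁻¹) := by
      intro h hh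
      apply hyS
      rw [phi_mul]
      simp only [map_inv, toAdd_inv]
      have := hale h hh
      omega
    have step1 : convR y x g = (S N * x).coeff g := by
      rw [convR, mulR]
      exact Finset.sum_congr rfl fun h hh => by rw [hterm h hh]
    have hgeom : (∑ n ∈ Finset.range N, w ^ n) * (1 - w) = 1 - w ^ N := by
      rw [← neg_sub w 1, mul_neg, geom_sum_mul, neg_sub]
    have hfact : S N * x = 1 - w ^ N := by
      rw [hS]
      dsimp only
      rw [mul_assoc, hux, hgeom]
    have hwN : (w ^ N).coeff g = 0 := by
      by_contra hne
      have := pow_support φ w hw_supp N g (Finsupp.mem_support_iff.2 hne)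
      omega
    rw [step1, hfact, MonoidAlgebra.coeff_sub, Finsupp.sub_apply, one_apply', hwN, sub_zero]

end Aux

open Finset in
/-- **Invertibility in the Novikov ring.**  Let `K` be a field and `G` a group whose
group ring `KG` has no zero divisors and only trivial units, and let `φ : G ↠ ℤ`.
A nonzero `x ∈ KG` is invertible in the Novikov ring of `(G, φ)` iff `φ` restricted to
the support of `x` attains its minimum at a unique element of the support. -/


theorem novikov_invertible_iff_unique_min
    {K G : Type*} [Field K] [Group G]
    (hnzd : ∀ a b : MonoidAlgebra K G, a * b = 0 → a = 0 ∨ b = 0)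
    (htu : ∀ u v : MonoidAlgebra K G, u * v = 1 → v * u = 1 →
      ∃ (c : K) (g : G), u = MonoidAlgebra.single g c)
    (φ : G →* Multiplicative ℤ) (hφ : Function.Surjective φ)
    (x : MonoidAlgebra K G) (hx : x ≠ 0) :
    (∃ y : G → K, IsNovikov φ y ∧
        convL x y = deltaOne ∧ convR y x = deltaOne) ↔
    (∃ g ∈ x.coeff.support, ∀ h ∈ x.coeff.support, h ≠ g → toAdd (φ g) < toAdd (φ h)) := by
  constructor
  · rintro ⟨y, hNov, hL, hR⟩
    exact forward_dir hnzd htu φ x hx y hNov hL hR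
  · rintro ⟨g₀, hg₀, hmin⟩
    exact reverse_dir φ x g₀ hg₀ hmin
end

section
/- Let R be a ring, G a group, φ : G → ℤ an epimorphism, t ∈ G with φ(t) = 1, and K = ker φ. There is a short exact sequence of left RG-modules 0 → RG → Nov(φ) ⊕ Nov(−φ) → ∏_{i ∈ ℤ} (RK)tⁱ → 0, where the first map is the diagonal embedding and the second map sends (x, y) to x − y, viewing both Novikov rings inside the module of arbitrary formal series ∑_{i ∈ ℤ} x_i tⁱ with x_i ∈ RK. -/
open Multiplicative

variable {R : Type*} [Ring R] {G : Type*} [Group G]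

/-- A formal series (element of `∏_{i∈ℤ} (RK)tⁱ`, identifying a series `∑ x_i tⁱ` with
`x_i ∈ R[ker φ]` with the function `G → R` recording all its coefficients) is
*level-finite* if on each `φ`-level it has finite support. -/
def LevelFinite (φ : G →* Multiplicative ℤ) (f : G → R) : Prop :=
  ∀ i : ℤ, {g : G | f g ≠ 0 ∧ toAdd (φ g) = i}.Finite

/-- Membership in the Novikov ring `Nov(φ)`: powers of `t` bounded below. -/
def BoundedBelow (φ : G →* Multiplicative ℤ) (f : G → R) : Prop :=
  ∃ N : ℤ, ∀ g : G, f g ≠ 0 → N ≤ toAdd (φ g)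

/-- Membership in the Novikov ring `Nov(−φ)`: powers of `t` bounded above. -/
def BoundedAbove (φ : G →* Multiplicative ℤ) (f : G → R) : Prop :=
  ∃ N : ℤ, ∀ g : G, f g ≠ 0 → toAdd (φ g) ≤ N

/-- **The Novikov short exact sequence.**  For `φ : G ↠ ℤ`, identifying `RG` with
twisted Laurent polynomials over `R[ker φ]`, there is a short exact sequence
`0 → RG → Nov(φ) ⊕ Nov(−φ) → ∏_{i∈ℤ} (RK)tⁱ → 0`, where the first map is the diagonal
embedding and the second sends `(x, y) ↦ x − y`:
(1) the diagonal is injective; (2) a pair `(x, y)` maps to `0` iff `x = y` and this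
common series has finite support, i.e. lies in (the image of) `RG`; (3) every
level-finite series is the difference of a bounded-below and a bounded-above one. -/
theorem novikov_short_exact_sequence (φ : G →* Multiplicative ℤ)
    (hφ : Function.Surjective φ) :
    (Function.Injective
      (fun x : {f : G → R // (Set.Finite {g | f g ≠ 0})} => ((x : G → R), (x : G → R)))) ∧
    (∀ x y : G → R, LevelFinite φ x → BoundedBelow φ x →
      LevelFinite φ y → BoundedAbove φ y →
        (x - y = 0 ↔ (x = y ∧ Set.Finite {g | x g ≠ 0}))) ∧
    (∀ f : G → R, LevelFinite φ f →
      ∃ x y : G → R, LevelFinite φ x ∧ BoundedBelow φ x ∧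
        LevelFinite φ y ∧ BoundedAbove φ y ∧ f = x - y) := by
  refine ⟨?_, ?_, ?_⟩
  · intro a b hab
    exact Subtype.ext (congrArg Prod.fst hab)
  · intro x y hx hxb hy hyb
    constructor
    · intro h
      have hxy : x = y := sub_eq_zero.mp h
      refine ⟨hxy, ?_⟩
      obtain ⟨N, hN⟩ := hxb
      obtain ⟨M, hM⟩ := hyb
      have hsub : {g : G | x g ≠ 0} ⊆ ⋃ i ∈ Set.Icc N M, {g : G | x g ≠ 0 ∧ toAdd (φ g) = i} := by
        intro g hg
        simp only [Set.mem_iUnion, Set.mem_Icc]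
        exact ⟨toAdd (φ g), ⟨hN g hg, hM g (hxy ▸ hg)⟩, hg, rfl⟩
      exact ((Set.finite_Icc N M).biUnion (fun i _ => hx i)).subset hsub
    · intro ⟨h, _⟩
      rw [h, sub_self]
  · intro f hf
    refine ⟨fun g => if 0 ≤ toAdd (φ g) then f g else 0,
      fun g => if 0 ≤ toAdd (φ g) then 0 else -f g, ?_, ⟨0, ?_⟩, ?_, ⟨0, ?_⟩, ?_⟩
    · intro i
      refine (hf i).subset fun g hg => ?_
      obtain ⟨h1, h2⟩ := hg
      refine ⟨?_, h2⟩
      intro hc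
      apply h1
      simp [hc]
    · intro g hg
      by_contra hc
      apply hg
      simp [le_of_not_ge, hc] at *
    · intro i
      refine (hf i).subset fun g hg => ?_
      obtain ⟨h1, h2⟩ := hg
      refine ⟨?_, h2⟩
      intro hc
      apply h1
      simp [hc]
    · intro g hg
      by_contra hc
      push_neg at hc
      apply hg
      simp [le_of_lt hc]
    · funext g
      by_cases h : 0 ≤ toAdd (φ g) <;> simp [h]
end

section
/- Every subgroup of a RFRS group is RFRS. -/
/-- A group `G` is **RFRS** (residually finite rationally solvable) if it admits a
descending chain of finite-index normal subgroups `G = G₀ ≥ G₁ ≥ …` with trivial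
intersection, such that for every `i` the subgroup `G_{i+1}` contains the kernel of
`Gᵢ → H₁(Gᵢ; ℚ)`; equivalently, every element of `Gᵢ ∖ G_{i+1}` has non-torsion image
in the abelianization of `Gᵢ`. -/
def IsRFRS (G : Type*) [Group G] : Prop :=
  ∃ C : ℕ → Subgroup G,
    C 0 = ⊤ ∧
    (∀ i, C (i + 1) ≤ C i) ∧
    (∀ i, (C i).Normal) ∧
    (∀ i, (C i).FiniteIndex) ∧
    (⨅ i, C i) = ⊥ ∧
    (∀ i, ∀ g : G, ∀ hg : g ∈ C i, g ∉ C (i + 1) →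
      ¬ IsOfFinOrder (Abelianization.of (⟨g, hg⟩ : C i)))

/-- Every subgroup of a RFRS group is RFRS. -/
theorem IsRFRS.subgroup {G : Type*} [Group G] (hG : IsRFRS G) (H : Subgroup G) :
    IsRFRS H := by
  obtain ⟨C, h0, hdesc, hnorm, hfin, hinf, hab⟩ := hG
  refine ⟨fun i => (C i).subgroupOf H, ?_, ?_, ?_, ?_, ?_, ?_⟩
  · show (C 0).subgroupOf H = ⊤
    rw [h0, Subgroup.top_subgroupOf]
  · intro i
    exact Subgroup.comap_mono (hdesc i)
  · intro i
    exact (hnorm i).subgroupOf H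
  · intro i
    have := hfin i
    infer_instance
  · have : (⨅ i, (C i).subgroupOf H) = (⨅ i, C i).subgroupOf H :=
      (Subgroup.comap_iInf H.subtype C).symm
    rw [this, hinf, Subgroup.bot_subgroupOf]
  · intro i g hg hg' hfo
    -- map to the abelianization of `C i`
    have hnorm_i := hnorm i
    let φ : (C i).subgroupOf H →* C i :=
      { toFun := fun x => ⟨(x : H), x.2⟩
        map_one' := rfl
        map_mul' := fun _ _ => rfl }
    have hfo2 : IsOfFinOrder ((Abelianization.map φ) (Abelianization.of ⟨g, hg⟩)) :=
      (Abelianization.map φ).isOfFinOrder hfo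
    have : (Abelianization.map φ) (Abelianization.of ⟨g, hg⟩) =
        Abelianization.of (⟨(g : G), hg⟩ : C i) := rfl
    rw [this] at hfo2
    have hgn : (g : G) ∉ C (i + 1) := hg'
    exact hab i g hg hgn hfo2
end
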